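/- arXiv:1806.06459 — 5 statements merged into one kernel-verified Lean document; each statement's English description precedes it below -/
import Mathlib

section
/- If a Young diagram λ with at most d rows and N boxes majorizes a Young diagram μ with at most d rows and N boxes, then (1/N!)·∏_{i=1}^d (d−i+λ_i)!/(d−i)! ≥ (1/N!)·∏_{i=1}^d (d−i+μ_i)!/(d−i)!, i.e., d_λ/m_λ ≥ d_μ/m_μ where d_λ and m_λ are the SU(d) representation dimension and multiplicity given by the hook length formulas. -/
open Finset

private lemma fact_mul_fact_le {A B : ℕ} (hB : 1 ≤ B) (hBA : B ≤ A + 1) :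
    A.factorial * B.factorial ≤ (A + 1).factorial * (B - 1).factorial := by
  obtain ⟨b, rfl⟩ : ∃ b, B = b + 1 := ⟨B - 1, by omega⟩
  simp only [Nat.factorial_succ, Nat.add_sub_cancel]
  calc A.factorial * ((b + 1) * b.factorial)
      = (b + 1) * (A.factorial * b.factorial) := by ring
    _ ≤ (A + 1) * (A.factorial * b.factorial) := Nat.mul_le_mul_right _ hBA
    _ = (A + 1) * A.factorial * b.factorial := by ring

private lemma key_prod (d : ℕ) (lam : ℕ → ℕ) (hlam_mono : Antitone lam) :
    ∀ M : ℕ, ∀ mu : ℕ → ℕ, Antitone mu → (∀ i, d ≤ i → mu i = 0) →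
      (∑ i ∈ range d, mu i = ∑ i ∈ range d, lam i) →
      (∀ s, s ≤ d → ∑ i ∈ range s, mu i ≤ ∑ i ∈ range s, lam i) →
      (∑ s ∈ range (d + 1),
        ((∑ i ∈ range s, lam i) - (∑ i ∈ range s, mu i))) ≤ M →
      ∏ i ∈ range d, (d - 1 - i + mu i).factorial
        ≤ ∏ i ∈ range d, (d - 1 - i + lam i).factorial := by
  intro M
  induction M with
  | zero =>
      intro mu hmono hmu0 hsum hmaj hmeas
      -- measure 0: all partial sums equal, so mu = lam on range d
      have hterm : ∀ s, s ≤ d → ∑ i ∈ range s, mu i = ∑ i ∈ range s, lam i := by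
        intro s hs
        have h0 : (∑ i ∈ range s, lam i) - (∑ i ∈ range s, mu i) = 0 := by
          have := Finset.sum_eq_zero_iff.mp (Nat.le_zero.mp hmeas) s
            (mem_range.mpr (by omega))
          exact this
        have := hmaj s hs
        omega
      refine le_of_eq (Finset.prod_congr rfl ?_)
      intro t ht
      have ht' := mem_range.mp ht
      have h1 := hterm t (by omega)
      have h2 := hterm (t + 1) (by omega)
      rw [Finset.sum_range_succ, Finset.sum_range_succ] at h2
      have : mu t = lam t := by omega
      rw [this]
  | succ M ih =>
      intro mu hmono hmu0 hsum hmaj hmeas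
      by_cases hall : ∀ t, t < d → mu t = lam t
      · refine le_of_eq (Finset.prod_congr rfl ?_)
        intro t ht
        rw [hall t (mem_range.mp ht)]
      · push_neg at hall
        have hexi : ∃ t, t < d ∧ mu t ≠ lam t := hall
        obtain ⟨i, hid, hine, hi_min⟩ : ∃ i, i < d ∧ mu i ≠ lam i ∧
            ∀ t, t < i → mu t = lam t := by
          refine ⟨Nat.find hexi, (Nat.find_spec hexi).1, (Nat.find_spec hexi).2, ?_⟩
          intro t ht
          have h := Nat.find_min hexi ht
          push_neg at h
          exact h (lt_trans ht (Nat.find_spec hexi).1)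
        have hPeq : ∀ s, s ≤ i → ∑ t ∈ range s, mu t = ∑ t ∈ range s, lam t := by
          intro s hs
          exact Finset.sum_congr rfl fun t ht => hi_min t (by
            have := mem_range.mp ht; omega)
        have hmui : mu i < lam i := by
          have h1 := hmaj (i + 1) (by omega)
          rw [Finset.sum_range_succ, Finset.sum_range_succ, hPeq i le_rfl] at h1
          omega
        have hPi1 : ∑ t ∈ range (i + 1), mu t < ∑ t ∈ range (i + 1), lam t := by
          rw [Finset.sum_range_succ, Finset.sum_range_succ, hPeq i le_rfl]
          omega
        -- existence of a row after i where mu strictly drops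
        have hexj : ∃ u, i < u ∧ mu (u + 1) < mu u := by
          by_contra hc
          push_neg at hc
          -- mu is non-decreasing after i, hence constant; but sum after i is positive
          have htail : ∑ t ∈ range (i + 1), mu t + ∑ t ∈ Ico (i + 1) d, mu t
              = ∑ t ∈ range d, mu t := by
            simp only [Finset.range_eq_Ico]
            exact Finset.sum_Ico_consecutive _ (by omega) (by omega)
          have htail' : ∑ t ∈ range (i + 1), lam t + ∑ t ∈ Ico (i + 1) d, lam t
              = ∑ t ∈ range d, lam t := by
            simp only [Finset.range_eq_Ico]
            exact Finset.sum_Ico_consecutive _ (by omega) (by omega)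
          have hpos : 0 < ∑ t ∈ Ico (i + 1) d, mu t := by omega
          obtain ⟨t0, ht0mem, ht0pos⟩ : ∃ t0 ∈ Ico (i + 1) d, mu t0 ≠ 0 := by
            by_contra hz
            push_neg at hz
            have := Finset.sum_eq_zero hz
            omega
          have ht0 := Finset.mem_Ico.mp ht0mem
          have hchain : ∀ k, mu t0 ≤ mu (t0 + k) := by
            intro k
            induction k with
            | zero => simp
            | succ k ihk =>
                have h1 := hc (t0 + k) (by omega)
                have h2 : t0 + (k + 1) = t0 + k + 1 := by omega
                rw [h2]
                omega
          have := hchain (d - t0)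
          have hzero : mu (t0 + (d - t0)) = 0 := hmu0 _ (by omega)
          omega
        obtain ⟨j, hij, hjdrop, hj_min⟩ : ∃ j, i < j ∧ mu (j + 1) < mu j ∧
            ∀ u, i < u → u < j → mu (u + 1) = mu u := by
          refine ⟨Nat.find hexj, (Nat.find_spec hexj).1, (Nat.find_spec hexj).2, ?_⟩
          intro u hu huj
          have h := Nat.find_min hexj huj
          push_neg at h
          have h1 := h hu
          have h2 : mu (u + 1) ≤ mu u := hmono (Nat.le_succ u)
          omega
        have hmuj1 : 1 ≤ mu j := by omega
        have hjd : j < d := by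
          by_contra h
          have := hmu0 j (by omega)
          omega
        have hconst : ∀ t, i < t → t ≤ j → mu t = mu (i + 1) := by
          intro t
          induction t with
          | zero => omega
          | succ t iht =>
              intro h1 h2
              rcases Nat.lt_or_ge i t with h | h
              · rw [hj_min t h (by omega), iht h (by omega)]
              · have : t = i := by omega
                rw [this]
        -- strict majorization on (i, j]
        have hstrict : ∀ s, i < s → s ≤ j →
            ∑ t ∈ range s, mu t < ∑ t ∈ range s, lam t := by
          by_contra hc
          push_neg at hc
          obtain ⟨s, hs1, hs2, hs3⟩ := hc
          have hexs : ∃ s, i < s ∧ s ≤ j ∧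
              ∑ t ∈ range s, lam t ≤ ∑ t ∈ range s, mu t := ⟨s, hs1, hs2, hs3⟩
          obtain ⟨s0, hs0i, hs0j, hs0le, hs0min⟩ : ∃ s0, i < s0 ∧ s0 ≤ j ∧
              (∑ t ∈ range s0, lam t ≤ ∑ t ∈ range s0, mu t) ∧
              ∀ t, t < s0 → ¬(i < t ∧ t ≤ j ∧
                ∑ u ∈ range t, lam u ≤ ∑ u ∈ range t, mu u) := by
            refine ⟨Nat.find hexs, (Nat.find_spec hexs).1, (Nat.find_spec hexs).2.1,
              (Nat.find_spec hexs).2.2, fun t ht => Nat.find_min hexs ht⟩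
          have heq : ∑ t ∈ range s0, mu t = ∑ t ∈ range s0, lam t :=
            le_antisymm (hmaj s0 (by omega)) hs0le
          have hs0ne : s0 ≠ i + 1 := by
            intro h
            rw [h] at heq
            omega
          have hs0ge : i + 2 ≤ s0 := by omega
          -- predecessor t = s0 - 1
          obtain ⟨t, rfl⟩ : ∃ t, s0 = t + 1 := ⟨s0 - 1, by omega⟩
          have htlt : ∑ u ∈ range t, mu u < ∑ u ∈ range t, lam u := by
            have hmin := hs0min t (by omega)
            push_neg at hmin
            have h1 := hmin (by omega) (by omega)
            have h2 := hmaj t (by omega)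
            omega
          rw [Finset.sum_range_succ, Finset.sum_range_succ] at heq
          have hmut : lam t < mu t := by omega
          have hmutc : mu t = mu (i + 1) := hconst t (by omega) (by omega)
          have hmus0 : mu (t + 1) = mu (i + 1) := hconst (t + 1) (by omega) hs0j
          have hlams0 : lam (t + 1) ≤ lam t := hlam_mono (by omega)
          have hmaj2 := hmaj (t + 2) (by omega)
          rw [Finset.sum_range_succ, Finset.sum_range_succ] at hmaj2
          rw [Finset.sum_range_succ, Finset.sum_range_succ] at hmaj2
          omega
        -- the new diagram mu'
        set mu' : ℕ → ℕ := fun t => if t = i then mu i + 1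
          else if t = j then mu j - 1 else mu t with hmu'_def
        have hne_ij : i ≠ j := by omega
        have hmu'i : mu' i = mu i + 1 := by simp [hmu'_def]
        have hmu'j : mu' j = mu j - 1 := by simp [hmu'_def, hne_ij.symm]
        have hmu'ne : ∀ t, t ≠ i → t ≠ j → mu' t = mu t := by
          intro t h1 h2
          simp [hmu'_def, h1, h2]
        -- mu' antitone
        have hmono' : Antitone mu' := by
          apply antitone_nat_of_succ_le
          intro n
          by_cases h1 : n + 1 = i
          · -- n = i - 1 < i, so mu n = lam n; also n ≠ j
            have hn_i : n ≠ i := by omega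
            have hn_j : n ≠ j := by omega
            rw [hmu'ne n hn_i hn_j, h1, hmu'i]
            have h2 : mu n = lam n := hi_min n (by omega)
            have h3 : lam i ≤ lam n := hlam_mono (by omega)
            omega
          · by_cases h2 : n + 1 = j
            · rw [h2, hmu'j]
              by_cases h3 : n = i
              · rw [h3, hmu'i]
                have := hmono (show i ≤ j by omega)
                omega
              · rw [hmu'ne n h3 (by omega)]
                have h5 : mu (n + 1) ≤ mu n := hmono (Nat.le_succ n)
                rw [h2] at h5
                omega
            · by_cases h3 : n = i
              · rw [h3, hmu'i, hmu'ne (i + 1) (by omega) (by omega)]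
                have h5 : mu (i + 1) ≤ mu i := hmono (Nat.le_succ i)
                omega
              · by_cases h4 : n = j
                · rw [h4, hmu'j, hmu'ne (j + 1) (by omega) (by omega)]
                  omega
                · rw [hmu'ne n h3 h4, hmu'ne (n + 1) h1 h2]
                  exact hmono (Nat.le_succ n)
        have hmu'0 : ∀ t, d ≤ t → mu' t = 0 := by
          intro t ht
          rw [hmu'ne t (by omega) (by omega)]
          exact hmu0 t ht
        -- partial sums of mu'
        have hP1 : ∀ s, s ≤ i → ∑ t ∈ range s, mu' t = ∑ t ∈ range s, mu t := by
          intro s hs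
          refine Finset.sum_congr rfl fun t ht => ?_
          have := mem_range.mp ht
          exact hmu'ne t (by omega) (by omega)
        have hP2 : ∀ s, i < s → s ≤ j →
            ∑ t ∈ range s, mu' t = ∑ t ∈ range s, mu t + 1 := by
          intro s h1 h2
          have hi_mem : i ∈ range s := mem_range.mpr (by omega)
          have e1 := (Finset.add_sum_erase (range s) mu' hi_mem)
          have e2 := (Finset.add_sum_erase (range s) mu hi_mem)
          have e3 : ∑ t ∈ (range s).erase i, mu' t
              = ∑ t ∈ (range s).erase i, mu t := by
            refine Finset.sum_congr rfl fun t ht => ?_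
            have h4 := Finset.mem_erase.mp ht
            have h5 := mem_range.mp h4.2
            exact hmu'ne t h4.1 (by omega)
          rw [hmu'i] at e1
          omega
        have hP3 : ∀ s, j < s →
            ∑ t ∈ range s, mu' t = ∑ t ∈ range s, mu t := by
          intro s h1
          have hi_mem : i ∈ range s := mem_range.mpr (by omega)
          have hj_mem : j ∈ (range s).erase i :=
            Finset.mem_erase.mpr ⟨hne_ij.symm, mem_range.mpr (by omega)⟩
          have e1 := Finset.add_sum_erase (range s) mu' hi_mem
          have e2 := Finset.add_sum_erase (range s) mu hi_mem
          have e3 := Finset.add_sum_erase _ mu' hj_mem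
          have e4 := Finset.add_sum_erase _ mu hj_mem
          have e5 : ∑ t ∈ ((range s).erase i).erase j, mu' t
              = ∑ t ∈ ((range s).erase i).erase j, mu t := by
            refine Finset.sum_congr rfl fun t ht => ?_
            have h4 := Finset.mem_erase.mp ht
            have h5 := Finset.mem_erase.mp h4.2
            exact hmu'ne t h5.1 h4.1
          rw [hmu'i] at e1
          rw [hmu'j] at e3
          omega
        -- majorization for mu'
        have hmaj' : ∀ s, s ≤ d →
            ∑ t ∈ range s, mu' t ≤ ∑ t ∈ range s, lam t := by
          intro s hs
          rcases le_or_gt s i with h | h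
          · rw [hP1 s h]; exact hmaj s hs
          · rcases le_or_gt s j with h2 | h2
            · rw [hP2 s h h2]
              have := hstrict s h h2
              omega
            · rw [hP3 s h2]; exact hmaj s hs
        -- equal total sum
        have hsum' : ∑ t ∈ range d, mu' t = ∑ t ∈ range d, lam t := by
          rw [hP3 d hjd]; exact hsum
        -- measure decreases
        have hmeas' : ∑ s ∈ range (d + 1),
            ((∑ t ∈ range s, lam t) - (∑ t ∈ range s, mu' t)) ≤ M := by
          have hlt : ∑ s ∈ range (d + 1),
              ((∑ t ∈ range s, lam t) - (∑ t ∈ range s, mu' t))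
              < ∑ s ∈ range (d + 1),
              ((∑ t ∈ range s, lam t) - (∑ t ∈ range s, mu t)) := by
            apply Finset.sum_lt_sum
            · intro s _
              have : ∑ t ∈ range s, mu t ≤ ∑ t ∈ range s, mu' t := by
                rcases le_or_gt s i with h | h
                · rw [hP1 s h]
                · rcases le_or_gt s j with h2 | h2
                  · rw [hP2 s h h2]; omega
                  · rw [hP3 s h2]
              omega
            · refine ⟨i + 1, mem_range.mpr (by omega), ?_⟩
              rw [hP2 (i + 1) (by omega) (by omega)]
              have := hstrict (i + 1) (by omega) (by omega)
              omega
          omega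
        -- product increases when moving one box
        have hprod : ∏ t ∈ range d, (d - 1 - t + mu t).factorial
            ≤ ∏ t ∈ range d, (d - 1 - t + mu' t).factorial := by
          have hi_mem : i ∈ range d := mem_range.mpr hid
          have hj_mem : j ∈ (range d).erase i :=
            Finset.mem_erase.mpr ⟨hne_ij.symm, mem_range.mpr hjd⟩
          rw [← Finset.mul_prod_erase (range d) _ hi_mem,
              ← Finset.mul_prod_erase _ _ hj_mem,
              ← Finset.mul_prod_erase (range d)
                (fun t => (d - 1 - t + mu' t).factorial) hi_mem,
              ← Finset.mul_prod_erase _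
                (fun t => (d - 1 - t + mu' t).factorial) hj_mem]
          have e5 : ∏ t ∈ ((range d).erase i).erase j, (d - 1 - t + mu' t).factorial
              = ∏ t ∈ ((range d).erase i).erase j, (d - 1 - t + mu t).factorial := by
            refine Finset.prod_congr rfl fun t ht => ?_
            have h4 := Finset.mem_erase.mp ht
            have h5 := Finset.mem_erase.mp h4.2
            rw [hmu'ne t h5.1 h4.1]
          rw [e5, ← mul_assoc, ← mul_assoc]
          apply Nat.mul_le_mul_right
          have hmuij : mu j ≤ mu i := by
            have h1 := hconst j hij le_rfl
            have h2 : mu (i + 1) ≤ mu i := hmono (Nat.le_succ i)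
            omega
          have hA : d - 1 - i + mu' i = (d - 1 - i + mu i) + 1 := by
            rw [hmu'i]; omega
          have hB : d - 1 - j + mu' j = (d - 1 - j + mu j) - 1 := by
            rw [hmu'j]; omega
          rw [hA, hB]
          exact fact_mul_fact_le (by omega) (by omega)
        exact le_trans hprod (ih mu' hmono' hmu'0 hsum' hmaj' hmeas')

/-- If a Young diagram `λ` with at most `d` rows and `N` boxes majorizes `μ`, then
`(1/N!)·∏_{i=1}^d (d−i+λ_i)!/(d−i)! ≥ (1/N!)·∏_{i=1}^d (d−i+μ_i)!/(d−i)!`,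
i.e., `d_λ/m_λ ≥ d_μ/m_μ`. (Rows are indexed `0,…,d−1` here.) -/
theorem majorization_ratio_mono (d N : ℕ) (hd : 0 < d) (lam mu : ℕ → ℕ)
    (hlam_mono : Antitone lam) (hmu_mono : Antitone mu)
    (hlam0 : ∀ i, d ≤ i → lam i = 0) (hmu0 : ∀ i, d ≤ i → mu i = 0)
    (hlam_sum : ∑ i ∈ Finset.range d, lam i = N)
    (hmu_sum : ∑ i ∈ Finset.range d, mu i = N)
    (hmaj : ∀ s, s ≤ d → ∑ i ∈ Finset.range s, mu i ≤ ∑ i ∈ Finset.range s, lam i) :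
    (1 / (Nat.factorial N : ℝ)) *
        ∏ i ∈ Finset.range d,
          ((Nat.factorial (d - 1 - i + mu i) : ℝ) / (Nat.factorial (d - 1 - i) : ℝ))
      ≤ (1 / (Nat.factorial N : ℝ)) *
        ∏ i ∈ Finset.range d,
          ((Nat.factorial (d - 1 - i + lam i) : ℝ) / (Nat.factorial (d - 1 - i) : ℝ)) := by
  have hsum : ∑ i ∈ Finset.range d, mu i = ∑ i ∈ Finset.range d, lam i := by
    rw [hmu_sum, hlam_sum]
  have key := key_prod d lam hlam_mono
    (∑ s ∈ Finset.range (d + 1),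
      ((∑ i ∈ Finset.range s, lam i) - (∑ i ∈ Finset.range s, mu i)))
    mu hmu_mono hmu0 hsum hmaj le_rfl
  rw [Finset.prod_div_distrib, Finset.prod_div_distrib]
  have hden : (0:ℝ) < ∏ i ∈ Finset.range d, (Nat.factorial (d - 1 - i) : ℝ) :=
    Finset.prod_pos fun t _ => by positivity
  apply mul_le_mul_of_nonneg_left _ (by positivity)
  rw [div_le_div_iff_of_pos_right hden]
  exact_mod_cast key
end

section
/- Among Young diagrams of N boxes in at most d rows, the ratio ∏_{i=1}^d (d−i+λ_i)!/(d−i)! is minimized by the most balanced diagram (with t rows of length ⌈N/d⌉ and d−t rows of length ⌊N/d⌋ where t = N − d⌊N/d⌋), and maximized by the single-row diagram (N, 0, ..., 0). -/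
open Finset

lemma prod_split2 {M : Type*} [CommMonoid M] (s : Finset ℕ) (f : ℕ → M) {j k : ℕ}
    (hj : j ∈ s) (hk : k ∈ s) (hjk : j ≠ k) :
    ∏ i ∈ s, f i = f j * (f k * ∏ i ∈ (s.erase j).erase k, f i) := by
  rw [Finset.mul_prod_erase (s.erase j) f (Finset.mem_erase.mpr ⟨Ne.symm hjk, hk⟩),
    Finset.mul_prod_erase s f hj]

lemma sum_split2 (s : Finset ℕ) (f : ℕ → ℕ) {j k : ℕ}
    (hj : j ∈ s) (hk : k ∈ s) (hjk : j ≠ k) :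
    ∑ i ∈ s, f i = f j + (f k + ∑ i ∈ (s.erase j).erase k, f i) := by
  rw [Finset.add_sum_erase (s.erase j) f (Finset.mem_erase.mpr ⟨Ne.symm hjk, hk⟩),
    Finset.add_sum_erase s f hj]

-- move identity: decrease at j, increase at k
lemma move_eq (d : ℕ) (lam : ℕ → ℕ) {j k : ℕ} (hj : j < d) (hk : k < d) (hjk : j ≠ k)
    (h1 : 1 ≤ lam j) :
    (∏ i ∈ range d, (d - 1 - i + lam i).factorial) * (d - 1 - k + lam k + 1)
      = (∏ i ∈ range d, (d - 1 - i +
          Function.update (Function.update lam j (lam j - 1)) k (lam k + 1) i).factorial)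
        * (d - 1 - j + lam j) := by
  set lam' := Function.update (Function.update lam j (lam j - 1)) k (lam k + 1) with hl
  have hjm : j ∈ range d := mem_range.mpr hj
  have hkm : k ∈ range d := mem_range.mpr hk
  have hpj : lam' j = lam j - 1 := by
    simp [hl, Function.update, hjk]
  have hpk : lam' k = lam k + 1 := by simp [hl]
  rw [prod_split2 (range d) _ hjm hkm hjk, prod_split2 (range d)
    (fun i => (d - 1 - i + lam' i).factorial) hjm hkm hjk]
  have hrest : ∏ i ∈ ((range d).erase j).erase k, (d - 1 - i + lam' i).factorial
      = ∏ i ∈ ((range d).erase j).erase k, (d - 1 - i + lam i).factorial := by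
    refine Finset.prod_congr rfl fun i hi => ?_
    have hik : i ≠ k := (Finset.mem_erase.mp hi).1
    have hij : i ≠ j := (Finset.mem_erase.mp (Finset.mem_erase.mp hi).2).1
    simp [hl, Function.update, hik, hij]
  rw [hrest, hpj, hpk]
  obtain ⟨m, hm⟩ : ∃ m, lam j = m + 1 := ⟨lam j - 1, by omega⟩
  rw [hm]
  simp only [Nat.add_sub_cancel]
  have e1 : d - 1 - j + (m + 1) = (d - 1 - j + m) + 1 := by omega
  have e2 : d - 1 - k + (lam k + 1) = (d - 1 - k + lam k) + 1 := by omega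
  rw [e1, e2, Nat.factorial_succ, Nat.factorial_succ]
  ring

lemma move_le (d : ℕ) (lam : ℕ → ℕ) {j k : ℕ} (hj : j < d) (hk : k < d) (hjk : j ≠ k)
    (h1 : 1 ≤ lam j) (hcond : d - 1 - k + lam k + 1 ≤ d - 1 - j + lam j) :
    (∏ i ∈ range d, (d - 1 - i +
        Function.update (Function.update lam j (lam j - 1)) k (lam k + 1) i).factorial)
      ≤ ∏ i ∈ range d, (d - 1 - i + lam i).factorial := by
  have key := move_eq d lam hj hk hjk h1
  have hpos : 0 < d - 1 - j + lam j := by omega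
  apply Nat.le_of_mul_le_mul_right _ hpos
  rw [← key]
  exact Nat.mul_le_mul_left _ hcond

lemma move_ge (d : ℕ) (lam : ℕ → ℕ) {j k : ℕ} (hj : j < d) (hk : k < d) (hjk : j ≠ k)
    (h1 : 1 ≤ lam j) (hcond : d - 1 - j + lam j ≤ d - 1 - k + lam k + 1) :
    (∏ i ∈ range d, (d - 1 - i + lam i).factorial)
      ≤ ∏ i ∈ range d, (d - 1 - i +
          Function.update (Function.update lam j (lam j - 1)) k (lam k + 1) i).factorial := by
  have key := move_eq d lam hj hk hjk h1
  have hpos : 0 < d - 1 - k + lam k + 1 := by omega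
  apply Nat.le_of_mul_le_mul_right _ hpos
  rw [key]
  exact Nat.mul_le_mul_left _ hcond
open Finset

section
variable (d N : ℕ)

lemma aux_max (hd : 0 < d) :
    ∀ V (lam : ℕ → ℕ), Antitone lam → (∀ i, d ≤ i → lam i = 0) →
      (∑ i ∈ range d, lam i = N) → (∑ i ∈ range d, i * lam i = V) →
      ∏ i ∈ range d, (d - 1 - i + lam i).factorial ≤
        ∏ i ∈ range d, (d - 1 - i + if i = 0 then N else 0).factorial := by
  intro V
  induction V using Nat.strong_induction_on with
  | _ V ih =>
  intro lam hmono h0 hsum hV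
  by_cases hA : ∀ i ∈ range d, i ≠ 0 → lam i = 0
  · -- lam is the one-row diagram
    have h0m : (0 : ℕ) ∈ range d := mem_range.mpr hd
    have hl0 : lam 0 = N := by
      rw [← hsum, ← Finset.add_sum_erase (range d) lam h0m]
      have : ∑ i ∈ (range d).erase 0, lam i = 0 := by
        apply Finset.sum_eq_zero
        intro i hi
        exact hA i (Finset.mem_of_mem_erase hi) (Finset.mem_erase.mp hi).1
      omega
    apply le_of_eq
    refine Finset.prod_congr rfl fun i hi => ?_
    by_cases hi0 : i = 0
    · subst hi0; rw [hl0]; simp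
    · rw [hA i hi hi0]; simp [hi0]
  · push_neg at hA
    obtain ⟨i0, hi0m, hi00, hi0pos⟩ := hA
    set S := (range d).filter (fun i => 0 < lam i) with hS
    have hSne : S.Nonempty := ⟨i0, Finset.mem_filter.mpr ⟨hi0m, Nat.pos_of_ne_zero hi0pos⟩⟩
    set k := S.max' hSne with hk
    have hkS : k ∈ S := S.max'_mem hSne
    have hkd : k < d := mem_range.mp (Finset.mem_filter.mp hkS).1
    have hkpos : 0 < lam k := (Finset.mem_filter.mp hkS).2
    have hk0 : k ≠ 0 := by
      have := S.le_max' i0 (Finset.mem_filter.mpr ⟨hi0m, Nat.pos_of_ne_zero hi0pos⟩)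
      omega
    have hafter : ∀ i, k < i → lam i = 0 := by
      intro i hki
      by_cases hid : i < d
      · by_contra hne
        have : i ∈ S := Finset.mem_filter.mpr ⟨mem_range.mpr hid, Nat.pos_of_ne_zero hne⟩
        have := S.le_max' i this
        omega
      · exact h0 i (by omega)
    set lam' := Function.update (Function.update lam k (lam k - 1)) 0 (lam 0 + 1) with hl'
    have hval : ∀ i, lam' i = if i = 0 then lam 0 + 1 else if i = k then lam k - 1 else lam i := by
      intro i
      by_cases h1 : i = 0
      · simp [hl', h1, Ne.symm hk0]
      · by_cases h2 : i = k <;> simp [hl', h1, h2, Function.update]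
    have hmono' : Antitone lam' := by
      intro x y hxy
      rw [hval x, hval y]
      by_cases hy0 : y = 0
      · have hx0 : x = 0 := by omega
        simp [hx0, hy0]
      · by_cases hx0 : x = 0
        · by_cases hyk : y = k
          · have := hmono (Nat.zero_le k)
            simp only [if_pos hx0, if_neg hy0, if_pos hyk]
            omega
          · have := hmono (Nat.zero_le y)
            simp only [if_pos hx0, if_neg hy0, if_neg hyk]
            omega
        · by_cases hxk : x = k
          · by_cases hyk : y = k
            · simp [hxk, hyk]
            · have hyk' : k < y := by omega
              have := hafter y hyk'
              simp only [if_neg hx0, if_neg hy0, if_pos hxk, if_neg hyk]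
              omega
          · by_cases hyk : y = k
            · have : lam k ≤ lam x := hmono (by omega)
              simp only [if_neg hx0, if_neg hy0, if_neg hxk, if_pos hyk]
              omega
            · have := hmono hxy
              simp only [if_neg hx0, if_neg hy0, if_neg hxk, if_neg hyk]
              omega
    have h0' : ∀ i, d ≤ i → lam' i = 0 := by
      intro i hdi
      rw [hval i]
      have h1 : i ≠ 0 := by omega
      have h2 : i ≠ k := by omega
      simp [h1, h2, h0 i hdi]
    have h0m : (0:ℕ) ∈ range d := mem_range.mpr hd
    have hkm : k ∈ range d := mem_range.mpr hkd
    have hsum' : ∑ i ∈ range d, lam' i = N := by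
      rw [sum_split2 (range d) lam' h0m hkm (Ne.symm hk0),
        ← hsum, sum_split2 (range d) lam h0m hkm (Ne.symm hk0)]
      have : ∑ i ∈ ((range d).erase 0).erase k, lam' i
          = ∑ i ∈ ((range d).erase 0).erase k, lam i := by
        refine Finset.sum_congr rfl fun i hi => ?_
        have hik : i ≠ k := (Finset.mem_erase.mp hi).1
        have hi0 : i ≠ 0 := (Finset.mem_erase.mp (Finset.mem_erase.mp hi).2).1
        rw [hval i]; simp [hik, hi0]
      rw [this, hval 0, hval k]
      simp [Ne.symm hk0, hk0]
      omega
    have hVnew : ∑ i ∈ range d, i * lam' i + k = V := by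
      rw [sum_split2 (range d) (fun i => i * lam' i) h0m hkm (Ne.symm hk0),
        ← hV, sum_split2 (range d) (fun i => i * lam i) h0m hkm (Ne.symm hk0)]
      have : ∑ i ∈ ((range d).erase 0).erase k, i * lam' i
          = ∑ i ∈ ((range d).erase 0).erase k, i * lam i := by
        refine Finset.sum_congr rfl fun i hi => ?_
        have hik : i ≠ k := (Finset.mem_erase.mp hi).1
        have hi0 : i ≠ 0 := (Finset.mem_erase.mp (Finset.mem_erase.mp hi).2).1
        rw [hval i]; simp [hik, hi0]
      rw [this, hval 0, hval k]
      simp only [Ne.symm hk0, hk0, if_true, if_false, if_neg hk0]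
      have : k * (lam k - 1) + k = k * lam k := by
        obtain ⟨m, hm⟩ : ∃ m, lam k = m + 1 := ⟨lam k - 1, by omega⟩
        rw [hm]; simp only [Nat.add_sub_cancel]; ring
      omega
    have hlt : ∑ i ∈ range d, i * lam' i < V := by omega
    have step : ∏ i ∈ range d, (d - 1 - i + lam i).factorial
        ≤ ∏ i ∈ range d, (d - 1 - i + lam' i).factorial := by
      exact move_ge d lam hkd hd hk0 hkpos
        (by have := hmono (Nat.zero_le k); omega)
    exact le_trans step (ih _ hlt lam' hmono' h0' hsum' rfl)
end
open Finset

lemma aux_min (d N : ℕ) (hd : 0 < d) :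
    ∀ W (lam : ℕ → ℕ), Antitone lam → (∀ i, d ≤ i → lam i = 0) →
      (∑ i ∈ range d, lam i = N) → (∑ i ∈ range d, lam i * lam i = W) →
      ∏ i ∈ range d, (d - 1 - i + if i < N % d then N / d + 1 else N / d).factorial ≤
        ∏ i ∈ range d, (d - 1 - i + lam i).factorial := by
  intro W
  induction W using Nat.strong_induction_on with
  | _ W ih =>
  intro lam hmono h0 hsum hW
  by_cases hA : lam 0 ≤ lam (d - 1) + 1
  · -- base case: lam is the balanced diagram
    set v := lam (d - 1) with hv
    have hval2 : ∀ i < d, lam i = v ∨ lam i = v + 1 := by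
      intro i hi
      have h1 : lam i ≤ lam 0 := hmono (Nat.zero_le i)
      have h2 : v ≤ lam i := hmono (by omega : i ≤ d - 1)
      omega
    set T := (range d).filter (fun i => lam i = v + 1) with hT
    set t := T.card with ht
    have hiff : ∀ i < d, (i < t ↔ lam i = v + 1) := by
      intro i hi
      constructor
      · intro hit
        by_contra hne
        have hlv : lam i = v := by
          rcases hval2 i hi with h | h
          exacts [h, absurd h hne]
        have hsub : T ⊆ range i := by
          intro x hx
          obtain ⟨hxd, hxv⟩ := Finset.mem_filter.mp hx
          rw [mem_range]
          by_contra hxi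
          push_neg at hxi
          have := hmono hxi
          omega
        have := Finset.card_le_card hsub
        rw [Finset.card_range] at this
        omega
      · intro hlv
        have hsub : range (i + 1) ⊆ T := by
          intro x hx
          have hxi : x ≤ i := by
            have := mem_range.mp hx; omega
          refine Finset.mem_filter.mpr ⟨mem_range.mpr (by omega), ?_⟩
          have hge := hmono hxi
          rcases hval2 x (by omega) with h | h <;> omega
        have := Finset.card_le_card hsub
        rw [Finset.card_range] at this
        omega
    have htd : t < d := by
      have hsub : T ⊆ (range d).erase (d - 1) := by
        intro x hx
        obtain ⟨hxd, hxv⟩ := Finset.mem_filter.mp hx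
        refine Finset.mem_erase.mpr ⟨?_, hxd⟩
        intro h
        rw [h] at hxv
        omega
      have := Finset.card_le_card hsub
      rw [Finset.card_erase_of_mem (mem_range.mpr (by omega)), Finset.card_range] at this
      omega
    have hN : N = d * v + t := by
      rw [← hsum]
      have hcg : ∀ i ∈ range d, lam i = v + (if i < t then 1 else 0) := by
        intro i hi
        have hi' := mem_range.mp hi
        by_cases h : i < t
        · have := (hiff i hi').mp h
          simp [h]; omega
        · have hne : lam i ≠ v + 1 := fun hc => h ((hiff i hi').mpr hc)
          rcases hval2 i hi' with h2 | h2
          · simp [h]; omega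
          · exact absurd h2 hne
      rw [Finset.sum_congr rfl hcg, Finset.sum_add_distrib, Finset.sum_const, Finset.card_range,
        smul_eq_mul]
      have hind : ∑ i ∈ range d, (if i < t then 1 else 0) = t := by
        have h1 : (∑ i ∈ range d, if i < t then 1 else 0)
            = ((range d).filter (fun i => i < t)).card := by
          rw [Finset.card_filter]
        have h2 : (range d).filter (fun i => i < t) = range t := by
          ext x
          simp only [Finset.mem_filter, mem_range]
          omega
        rw [h1, h2, Finset.card_range]
      omega
    have hmod : N % d = t := by
      rw [hN, Nat.mul_add_mod, Nat.mod_eq_of_lt htd]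
    have hdiv : N / d = v := by
      rw [hN, Nat.mul_add_div hd, Nat.div_eq_of_lt htd, add_zero]
    apply le_of_eq
    refine Finset.prod_congr rfl fun i hi => ?_
    have hi' := mem_range.mp hi
    rw [hmod, hdiv]
    by_cases h : i < t
    · rw [if_pos h, (hiff i hi').mp h]
    · rw [if_neg h]
      have hne : lam i ≠ v + 1 := fun hc => h ((hiff i hi').mpr hc)
      rcases hval2 i hi' with h2 | h2
      · rw [h2]
      · exact absurd h2 hne
  · -- inductive step: perform a balancing move
    push_neg at hA
    set v := lam (d - 1) with hv
    have hA' : v + 2 ≤ lam 0 := hA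
    set J := (range d).filter (fun i => lam i = lam 0) with hJ
    have hJne : J.Nonempty := ⟨0, Finset.mem_filter.mpr ⟨mem_range.mpr hd, rfl⟩⟩
    set j := J.max' hJne with hj
    have hjJ := J.max'_mem hJne
    have hjd : j < d := mem_range.mp (Finset.mem_filter.mp hjJ).1
    have hjv : lam j = lam 0 := (Finset.mem_filter.mp hjJ).2
    set K := (range d).filter (fun i => lam i = v) with hK
    have hKne : K.Nonempty := ⟨d - 1, Finset.mem_filter.mpr ⟨mem_range.mpr (by omega), rfl⟩⟩
    set k := K.min' hKne with hk
    have hkK := K.min'_mem hKne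
    have hkd : k < d := mem_range.mp (Finset.mem_filter.mp hkK).1
    have hkv : lam k = v := (Finset.mem_filter.mp hkK).2
    have hjk : j < k := by
      by_contra h
      push_neg at h
      have := hmono h
      omega
    have hstar : ∀ i, j < i → lam i < lam j := by
      intro i hji
      by_cases hid : i < d
      · have hne : lam i ≠ lam 0 := by
          intro hc
          have := J.le_max' i (Finset.mem_filter.mpr ⟨mem_range.mpr hid, hc⟩)
          omega
        have := hmono (Nat.zero_le i)
        omega
      · have := h0 i (by omega)
        omega
    have hstar2 : ∀ i, i < k → lam k < lam i := by
      intro i hik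
      have hid : i < d := by omega
      have hne : lam i ≠ v := by
        intro hc
        have := K.min'_le i (Finset.mem_filter.mpr ⟨mem_range.mpr hid, hc⟩)
        omega
      have := hmono (le_of_lt hik)
      omega
    have h1j : 1 ≤ lam j := by omega
    set lam' := Function.update (Function.update lam j (lam j - 1)) k (lam k + 1) with hl'
    have hval : ∀ i, lam' i = if i = k then lam k + 1 else if i = j then lam j - 1 else lam i := by
      intro i
      by_cases h1 : i = k
      · simp [hl', h1]
      · by_cases h2 : i = j <;> simp [hl', h1, h2, Function.update]
    have hjkne : j ≠ k := by omega
    have hmono' : Antitone lam' := by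
      intro x y hxy
      rw [hval x, hval y]
      by_cases hxk : x = k
      · by_cases hyk : y = k
        · simp [hxk, hyk]
        · by_cases hyj : y = j
          · omega
          · have : lam y ≤ lam k := hmono (by omega)
            simp only [if_pos hxk, if_neg hyk, if_neg hyj]
            omega
      · by_cases hxj : x = j
        · by_cases hyk : y = k
          · simp only [if_neg hxk, if_pos hxj, if_pos hyk]
            omega
          · by_cases hyj : y = j
            · simp [hxj, hyj]
            · have := hstar y (by omega)
              simp only [if_neg hxk, if_pos hxj, if_neg hyk, if_neg hyj]
              omega
        · by_cases hyk : y = k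
          · have := hstar2 x (by omega)
            simp only [if_neg hxk, if_neg hxj, if_pos hyk]
            omega
          · by_cases hyj : y = j
            · have : lam j ≤ lam x := hmono (by omega)
              simp only [if_neg hxk, if_neg hxj, if_neg hyk, if_pos hyj]
              omega
            · have := hmono hxy
              simp only [if_neg hxk, if_neg hxj, if_neg hyk, if_neg hyj]
              omega
    have h0' : ∀ i, d ≤ i → lam' i = 0 := by
      intro i hdi
      rw [hval i]
      have h1 : i ≠ k := by omega
      have h2 : i ≠ j := by omega
      simp [h1, h2, h0 i hdi]
    have hkm : k ∈ range d := mem_range.mpr hkd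
    have hjm : j ∈ range d := mem_range.mpr hjd
    have ek : lam' k = lam k + 1 := by rw [hval k]; simp
    have ej : lam' j = lam j - 1 := by rw [hval j]; simp [hjkne, Ne.symm hjkne]
    have hrest1 : ∑ i ∈ ((range d).erase k).erase j, lam' i
        = ∑ i ∈ ((range d).erase k).erase j, lam i := by
      refine Finset.sum_congr rfl fun i hi => ?_
      have hij : i ≠ j := (Finset.mem_erase.mp hi).1
      have hik : i ≠ k := (Finset.mem_erase.mp (Finset.mem_erase.mp hi).2).1
      rw [hval i]; simp [hij, hik]
    have hrest2 : ∑ i ∈ ((range d).erase k).erase j, lam' i * lam' i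
        = ∑ i ∈ ((range d).erase k).erase j, lam i * lam i := by
      refine Finset.sum_congr rfl fun i hi => ?_
      have hij : i ≠ j := (Finset.mem_erase.mp hi).1
      have hik : i ≠ k := (Finset.mem_erase.mp (Finset.mem_erase.mp hi).2).1
      rw [hval i]; simp [hij, hik]
    have hsum' : ∑ i ∈ range d, lam' i = N := by
      rw [sum_split2 (range d) lam' hkm hjm (Ne.symm hjkne), ← hsum,
        sum_split2 (range d) lam hkm hjm (Ne.symm hjkne), hrest1, ek, ej]
      omega
    have hWlt : ∑ i ∈ range d, lam' i * lam' i < W := by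
      rw [sum_split2 (range d) (fun i => lam' i * lam' i) hkm hjm (Ne.symm hjkne), ← hW,
        sum_split2 (range d) (fun i => lam i * lam i) hkm hjm (Ne.symm hjkne), hrest2, ek, ej]
      obtain ⟨m, hm⟩ : ∃ m, lam j = m + 1 := ⟨lam j - 1, by omega⟩
      have hm2 : lam k + 1 ≤ m := by omega
      rw [hm]
      simp only [Nat.add_sub_cancel]
      nlinarith [hm2]
    have step : ∏ i ∈ range d, (d - 1 - i + lam' i).factorial
        ≤ ∏ i ∈ range d, (d - 1 - i + lam i).factorial := by
      rw [hl']
      exact move_le d lam hjd hkd hjkne h1j (by omega)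
    exact le_trans (ih _ hWlt lam' hmono' h0' hsum' rfl) step

/-- Among Young diagrams of `N` boxes in at most `d` rows, the ratio
`∏_{i=1}^d (d−i+λ_i)!/(d−i)!` is minimized by the most balanced diagram
(`N % d` rows of length `⌈N/d⌉` and the rest of length `⌊N/d⌋`) and maximized by
the single-row diagram `(N,0,…,0)`. (Rows are indexed `0,…,d−1` here.) -/
theorem balanced_min_onerow_max (d N : ℕ) (hd : 0 < d) (lam : ℕ → ℕ)
    (hlam_mono : Antitone lam) (hlam0 : ∀ i, d ≤ i → lam i = 0)
    (hlam_sum : ∑ i ∈ Finset.range d, lam i = N) :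
    (∏ i ∈ Finset.range d,
        ((Nat.factorial (d - 1 - i + (if i < N % d then N / d + 1 else N / d)) : ℝ) /
          (Nat.factorial (d - 1 - i) : ℝ)))
      ≤ (∏ i ∈ Finset.range d,
        ((Nat.factorial (d - 1 - i + lam i) : ℝ) / (Nat.factorial (d - 1 - i) : ℝ))) ∧
    (∏ i ∈ Finset.range d,
        ((Nat.factorial (d - 1 - i + lam i) : ℝ) / (Nat.factorial (d - 1 - i) : ℝ)))
      ≤ (∏ i ∈ Finset.range d,
        ((Nat.factorial (d - 1 - i + (if i = 0 then N else 0)) : ℝ) /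
          (Nat.factorial (d - 1 - i) : ℝ))) := by
  have hden : (0:ℝ) < ∏ i ∈ Finset.range d, (Nat.factorial (d - 1 - i) : ℝ) := by
    apply Finset.prod_pos
    intro i _
    exact_mod_cast Nat.factorial_pos _
  constructor
  · have h1 := aux_min d N hd _ lam hlam_mono hlam0 hlam_sum rfl
    rw [Finset.prod_div_distrib, Finset.prod_div_distrib]
    apply (div_le_div_iff_of_pos_right hden).mpr
    rw [← Nat.cast_prod, ← Nat.cast_prod]
    exact_mod_cast h1
  · have h2 := aux_max d N hd _ lam hlam_mono hlam0 hlam_sum rfl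
    rw [Finset.prod_div_distrib, Finset.prod_div_distrib]
    apply (div_le_div_iff_of_pos_right hden).mpr
    rw [← Nat.cast_prod, ← Nat.cast_prod]
    exact_mod_cast h2
end

section
/- If λ majorizes μ (both partitions of N into at most d parts), then for every s ∈ {1,...,d}: ∏_{i=1}^s (d−i+λ_i)!/(d−i)! ≥ [∏_{i=1}^s (d−i+μ_i)!/(d−i)!] · (d−s+1+μ_s)^{Σ_{i=1}^s(λ_i−μ_i)}. -/
lemma factAux2 (m n : ℕ) : (m + n).factorial ≤ m.factorial * (m + n) ^ n := by
  induction n with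
  | zero => simp
  | succ k ih =>
    have h1 : (m + (k+1)).factorial = (m + k + 1) * (m + k).factorial := rfl
    calc (m + (k+1)).factorial = (m + k + 1) * (m + k).factorial := h1
      _ ≤ (m + k + 1) * (m.factorial * (m + k) ^ k) := Nat.mul_le_mul_left _ ih
      _ ≤ (m + k + 1) * (m.factorial * (m + k + 1) ^ k) := by
          exact Nat.mul_le_mul_left _ (Nat.mul_le_mul_left _
            (Nat.pow_le_pow_left (Nat.le_succ _) k))
      _ = m.factorial * (m + (k+1)) ^ (k+1) := by ring

lemma key (d : ℕ) (hd : 0 < d) (lam mu : ℕ → ℕ)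
    (hmu_mono : Antitone mu)
    (hmaj : ∀ s, s ≤ d → ∑ i ∈ Finset.range s, mu i ≤ ∑ i ∈ Finset.range s, lam i) :
    ∀ s, 1 ≤ s → s ≤ d →
      (∏ i ∈ Finset.range s, (d - 1 - i + mu i).factorial)
        * (d - s + 1 + mu (s - 1)) ^
            (∑ i ∈ Finset.range s, lam i - ∑ i ∈ Finset.range s, mu i)
      ≤ ∏ i ∈ Finset.range s, (d - 1 - i + lam i).factorial := by
  intro s hs
  induction s, hs using Nat.le_induction with
  | base =>
    intro h1
    simp only [Finset.prod_range_one, Finset.sum_range_one, Nat.sub_zero, Nat.sub_self]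
    have hm : mu 0 ≤ lam 0 := by simpa using hmaj 1 h1
    have h2 : d - 1 + 1 = d := by omega
    have := Nat.factorial_mul_pow_le_factorial (m := d - 1 + mu 0) (n := lam 0 - mu 0)
    have h3 : d - 1 + mu 0 + (lam 0 - mu 0) = d - 1 + lam 0 := by omega
    have h4 : d - 1 + mu 0 + 1 = d - 1 + 1 + mu 0 := by omega
    rw [h3, h4] at this
    exact this
  | succ s hs ih =>
    intro hsd
    have hsd' : s ≤ d := by omega
    have ih' := ih hsd'
    set M := ∑ i ∈ Finset.range s, mu i with hM
    set L := ∑ i ∈ Finset.range s, lam i with hL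
    have hML : M ≤ L := hmaj s hsd'
    have hML' : M + mu s ≤ L + lam s := by
      have := hmaj (s+1) hsd
      simpa [Finset.sum_range_succ, ← hM, ← hL] using this
    set a := d - 1 - s with ha
    have hda : d - (s+1) + 1 = a + 1 := by omega
    have hds : d - s + 1 = a + 2 := by omega
    have hmus : mu s ≤ mu (s - 1) := hmu_mono (by omega)
    rw [Finset.prod_range_succ, Finset.prod_range_succ, Finset.sum_range_succ,
      Finset.sum_range_succ, ← hM, ← hL, hda]
    have hterm : d - 1 - s = a := rfl
    rw [hterm]
    rw [hds] at ih'
    set Pm := ∏ i ∈ Finset.range s, (d - 1 - i + mu i).factorial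
    set Pl := ∏ i ∈ Finset.range s, (d - 1 - i + lam i).factorial
    have hbase : a + 1 + mu s ≤ a + 2 + mu (s - 1) := by omega
    by_cases hcase : mu s ≤ lam s
    · have hΔ : L + lam s - (M + mu s) = (L - M) + (lam s - mu s) := by omega
      rw [hΔ, pow_add]
      have h1 : (a + mu s).factorial * (a + 1 + mu s) ^ (lam s - mu s)
          ≤ (a + lam s).factorial := by
        have := Nat.factorial_mul_pow_le_factorial (m := a + mu s) (n := lam s - mu s)
        have e1 : a + mu s + (lam s - mu s) = a + lam s := by omega
        have e2 : a + mu s + 1 = a + 1 + mu s := by omega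
        rwa [e1, e2] at this
      calc Pm * (a + mu s).factorial *
            ((a + 1 + mu s) ^ (L - M) * (a + 1 + mu s) ^ (lam s - mu s))
          ≤ Pm * (a + mu s).factorial *
            ((a + 2 + mu (s-1)) ^ (L - M) * (a + 1 + mu s) ^ (lam s - mu s)) := by
            exact Nat.mul_le_mul_left _ (Nat.mul_le_mul_right _
              (Nat.pow_le_pow_left hbase _))
        _ = (Pm * (a + 2 + mu (s-1)) ^ (L - M)) *
            ((a + mu s).factorial * (a + 1 + mu s) ^ (lam s - mu s)) := by ring
        _ ≤ Pl * (a + lam s).factorial := Nat.mul_le_mul ih' h1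
    · push_neg at hcase
      have hΔ : L - M = (L + lam s - (M + mu s)) + (mu s - lam s) := by omega
      have h1 : (a + mu s).factorial ≤ (a + lam s).factorial * (a + mu s) ^ (mu s - lam s) := by
        have := factAux2 (a + lam s) (mu s - lam s)
        have e1 : a + lam s + (mu s - lam s) = a + mu s := by omega
        rwa [e1] at this
      have h2 : Pm * (a + mu s).factorial * (a + 1 + mu s) ^ (L + lam s - (M + mu s))
          ≤ Pm * ((a + lam s).factorial * (a + mu s) ^ (mu s - lam s))
              * (a + 2 + mu (s-1)) ^ (L + lam s - (M + mu s)) :=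
        Nat.mul_le_mul (Nat.mul_le_mul_left _ h1) (Nat.pow_le_pow_left hbase _)
      refine h2.trans ?_
      have h3 : Pm * ((a + lam s).factorial * (a + mu s) ^ (mu s - lam s))
              * (a + 2 + mu (s-1)) ^ (L + lam s - (M + mu s))
          ≤ Pm * ((a + lam s).factorial * (a + 2 + mu (s-1)) ^ (mu s - lam s))
              * (a + 2 + mu (s-1)) ^ (L + lam s - (M + mu s)) := by
        exact Nat.mul_le_mul_right _ (Nat.mul_le_mul_left _
          (Nat.mul_le_mul_left _ (Nat.pow_le_pow_left (by omega) _)))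
      refine h3.trans ?_
      have h4 : Pm * ((a + lam s).factorial * (a + 2 + mu (s-1)) ^ (mu s - lam s))
              * (a + 2 + mu (s-1)) ^ (L + lam s - (M + mu s))
          = (Pm * (a + 2 + mu (s-1)) ^ (L - M)) * (a + lam s).factorial := by
        rw [hΔ, pow_add]; ring
      rw [h4]
      exact Nat.mul_le_mul_right _ ih'


/-- If `λ` majorizes `μ` (both partitions of `N` into at most `d` parts), then for every
`s ∈ {1,…,d}`:
`∏_{i=1}^s (d−i+λ_i)!/(d−i)! ≥ [∏_{i=1}^s (d−i+μ_i)!/(d−i)!] · (d−s+1+μ_s)^{∑_{i=1}^s(λ_i−μ_i)}`.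
(Rows are indexed `0,…,d−1` here, so `μ_s` is `mu (s-1)`.) -/
theorem majorization_partial_product_bound (d N : ℕ) (hd : 0 < d) (lam mu : ℕ → ℕ)
    (hlam_mono : Antitone lam) (hmu_mono : Antitone mu)
    (hlam0 : ∀ i, d ≤ i → lam i = 0) (hmu0 : ∀ i, d ≤ i → mu i = 0)
    (hlam_sum : ∑ i ∈ Finset.range d, lam i = N)
    (hmu_sum : ∑ i ∈ Finset.range d, mu i = N)
    (hmaj : ∀ s, s ≤ d → ∑ i ∈ Finset.range s, mu i ≤ ∑ i ∈ Finset.range s, lam i) :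
    ∀ s : ℕ, 1 ≤ s → s ≤ d →
      (∏ i ∈ Finset.range s,
          ((Nat.factorial (d - 1 - i + mu i) : ℝ) / (Nat.factorial (d - 1 - i) : ℝ)))
        * ((d - s + 1 + mu (s - 1) : ℕ) : ℝ)
            ^ (∑ i ∈ Finset.range s, lam i - ∑ i ∈ Finset.range s, mu i)
      ≤ ∏ i ∈ Finset.range s,
          ((Nat.factorial (d - 1 - i + lam i) : ℝ) / (Nat.factorial (d - 1 - i) : ℝ)) := by
  intro s hs1 hsd
  have hk := key d hd lam mu hmu_mono hmaj s hs1 hsd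
  have hG : (0:ℝ) < ∏ i ∈ Finset.range s, ((d - 1 - i).factorial : ℝ) := by
    apply Finset.prod_pos
    intro i _
    exact_mod_cast Nat.factorial_pos _
  rw [Finset.prod_div_distrib, Finset.prod_div_distrib, div_mul_eq_mul_div,
    div_le_div_iff_of_pos_right hG]
  exact_mod_cast hk
end

section
/- For N a multiple of d, the multiplicity of the trivial SU(d) representation in the N-fold tensor power, m = N! / ∏_{i=1}^d [(N/d + d − i)! / (d−i)!], satisfies m = d^N · Θ(N^{−(d²−1)/2}); in particular, log m = N log d + O(log N) as N → ∞ with d fixed. -/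
open Asymptotics Filter

lemma stirling_log_bound : ∃ C : ℝ, ∀ᶠ k : ℕ in atTop,
    |Real.log (Nat.factorial k) - (((k:ℝ) + 1/2) * Real.log k - k)| ≤ C := by
  have h := Stirling.tendsto_stirlingSeq_sqrt_pi
  have hpi : (0:ℝ) < Real.sqrt Real.pi := Real.sqrt_pos.2 Real.pi_pos
  have hlog : Tendsto (fun k => Real.log (Stirling.stirlingSeq k)) atTop
      (nhds (Real.log (Real.sqrt Real.pi))) :=
    ((Real.continuousAt_log hpi.ne').tendsto.comp h)
  refine ⟨|Real.log (Real.sqrt Real.pi)| + 1 + Real.log 2 / 2, ?_⟩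
  have hb := hlog.eventually (Metric.ball_mem_nhds _ one_pos)
  filter_upwards [hb, eventually_ge_atTop 1] with k hk hk1
  have hk0 : (0:ℝ) < k := by exact_mod_cast hk1
  have habs : |Real.log (Stirling.stirlingSeq k)| ≤ |Real.log (Real.sqrt Real.pi)| + 1 := by
    rw [Real.dist_eq] at hk
    have := abs_sub_abs_le_abs_sub (Real.log (Stirling.stirlingSeq k)) (Real.log (Real.sqrt Real.pi))
    linarith
  have hf := Stirling.log_stirlingSeq_formula k
  have h2k : Real.log (2 * (k:ℝ)) = Real.log 2 + Real.log k :=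
    Real.log_mul two_ne_zero hk0.ne'
  have hke : Real.log ((k:ℝ) / Real.exp 1) = Real.log k - 1 := by
    rw [Real.log_div hk0.ne' (Real.exp_ne_zero 1), Real.log_exp]
  rw [h2k, hke] at hf
  have : Real.log (Nat.factorial k) - (((k:ℝ) + 1/2) * Real.log k - k)
      = Real.log (Stirling.stirlingSeq k) + Real.log 2 / 2 := by linarith [hf]
  rw [this]
  have h2 : (0:ℝ) ≤ Real.log 2 / 2 := by positivity
  calc |Real.log (Stirling.stirlingSeq k) + Real.log 2 / 2|
      ≤ |Real.log (Stirling.stirlingSeq k)| + |Real.log 2 / 2| := abs_add_le _ _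
    _ ≤ |Real.log (Real.sqrt Real.pi)| + 1 + Real.log 2 / 2 := by
        rw [abs_of_nonneg h2]; linarith

set_option maxHeartbeats 2000000 in
lemma main_log_bound (d : ℕ) (hd : 2 ≤ d) (m : ℕ → ℝ)
    (hm : ∀ n : ℕ, 0 < n → m n =
      (Nat.factorial (n * d) : ℝ) /
        ∏ i ∈ Finset.range d,
          ((Nat.factorial (n + d - 1 - i) : ℝ) / (Nat.factorial (d - 1 - i) : ℝ))) :
    ∃ C : ℝ, ∀ᶠ n : ℕ in atTop,
      |Real.log (m n) - (((n*d : ℕ):ℝ) * Real.log d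
        - ((d:ℝ)^2 - 1)/2 * Real.log ((n*d : ℕ):ℝ))| ≤ C := by
  obtain ⟨C₀, hC₀⟩ := stirling_log_bound
  rw [eventually_atTop] at hC₀
  obtain ⟨K, hK⟩ := hC₀
  refine ⟨C₀ + d * (C₀ + (2*(d:ℝ) + (d:ℝ)^2))
      + (∑ i ∈ Finset.range d, |Real.log (Nat.factorial (d-1-i) : ℝ)|)
      + (d:ℝ)^2/2 * Real.log d, ?_⟩
  rw [eventually_atTop]
  refine ⟨max K 1, fun n hn => ?_⟩
  have hn1 : 1 ≤ n := le_trans (le_max_right _ _) hn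
  have hnK : K ≤ n := le_trans (le_max_left _ _) hn
  have hnR : (1:ℝ) ≤ n := by exact_mod_cast hn1
  have hn0 : (0:ℝ) < n := by linarith
  have hd0 : (0:ℝ) < d := by
    have : (2:ℝ) ≤ d := by exact_mod_cast hd
    linarith
  have hfact : ∀ k : ℕ, (0:ℝ) < (Nat.factorial k : ℝ) := fun k => by
    exact_mod_cast Nat.factorial_pos k
  -- log of m n
  have hlogm : Real.log (m n) = Real.log (Nat.factorial (n*d) : ℝ)
      - ∑ i ∈ Finset.range d, (Real.log (Nat.factorial (n+d-1-i) : ℝ)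
          - Real.log (Nat.factorial (d-1-i) : ℝ)) := by
    have hprod : (0:ℝ) < ∏ i ∈ Finset.range d,
        ((Nat.factorial (n + d - 1 - i) : ℝ) / (Nat.factorial (d - 1 - i) : ℝ)) :=
      Finset.prod_pos fun i _ => div_pos (hfact _) (hfact _)
    rw [hm n (by omega), Real.log_div (hfact _).ne' hprod.ne',
      Real.log_prod (fun i _ => (div_pos (hfact _) (hfact _)).ne')]
    congr 1
    exact Finset.sum_congr rfl fun i _ => Real.log_div (hfact _).ne' (hfact _).ne'
  -- per-term estimate
  have hterm : ∀ i ∈ Finset.range d,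
      |Real.log (Nat.factorial (n + d - 1 - i) : ℝ)
        - (((n:ℝ) + ((d-1-i : ℕ):ℝ) + 1/2) * Real.log n - (n:ℝ))|
      ≤ C₀ + (2*(d:ℝ) + (d:ℝ)^2) := by
    intro i hi
    rw [Finset.mem_range] at hi
    have hidx : n + d - 1 - i = n + (d - 1 - i) := by omega
    set j : ℕ := d - 1 - i with hj
    have hjd : (j:ℝ) ≤ (d:ℝ) := by exact_mod_cast (show j ≤ d by omega)
    have hj0 : (0:ℝ) ≤ (j:ℝ) := Nat.cast_nonneg j
    have hnj : (0:ℝ) < (n:ℝ) + j := by linarith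
    have hst := hK (n + j) (by omega)
    have hx : (0:ℝ) < 1 + (j:ℝ)/n := by positivity
    have hL1 : Real.log (1 + (j:ℝ)/n) ≤ (j:ℝ)/n := by
      have := Real.log_le_sub_one_of_pos hx; linarith
    have hL0 : (j:ℝ)/((n:ℝ)+j) ≤ Real.log (1 + (j:ℝ)/n) := by
      have h2 := Real.one_sub_inv_le_log_of_pos hx
      have hinv : (1 + (j:ℝ)/n)⁻¹ = (n:ℝ)/((n:ℝ)+j) := by
        rw [inv_eq_one_div]; field_simp
      rw [hinv] at h2
      have heq : 1 - (n:ℝ)/((n:ℝ)+j) = (j:ℝ)/((n:ℝ)+j) := by field_simp; ring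
      linarith [heq ▸ h2]
    have hLpos : 0 ≤ Real.log (1 + (j:ℝ)/n) := Real.log_nonneg (by
      have := div_nonneg hj0 hn0.le; linarith)
    have hcast : ((n + j : ℕ):ℝ) = (n:ℝ) + j := by push_cast; ring
    have hlognj : Real.log ((n:ℝ) + (j:ℝ)) = Real.log n + Real.log (1 + (j:ℝ)/n) := by
      rw [show (n:ℝ) + (j:ℝ) = n * (1 + (j:ℝ)/n) by field_simp,
        Real.log_mul hn0.ne' hx.ne']
    rw [hcast, hlognj] at hst
    set L := Real.log (1 + (j:ℝ)/n) with hLdef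
    -- |S - P| ≤ 2d + d^2
    have key : |((n:ℝ) + j + 1/2) * (Real.log n + L) - ((n:ℝ)+(j:ℝ))
        - (((n:ℝ) + (j:ℝ) + 1/2) * Real.log n - (n:ℝ))| ≤ 2*(d:ℝ) + (d:ℝ)^2 := by
      have e1 : ((n:ℝ) + j + 1/2) * (Real.log n + L) - ((n:ℝ)+(j:ℝ))
          - (((n:ℝ) + (j:ℝ) + 1/2) * Real.log n - (n:ℝ))
          = ((n:ℝ) + j + 1/2) * L - j := by ring
      rw [e1, abs_le]
      constructor
      · have h1 : (j:ℝ) = ((n:ℝ)+j) * ((j:ℝ)/((n:ℝ)+j)) := by field_simp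
        have h2 : ((n:ℝ)+j) * ((j:ℝ)/((n:ℝ)+j)) ≤ ((n:ℝ)+j) * L :=
          mul_le_mul_of_nonneg_left hL0 hnj.le
        have h3 : (0:ℝ) ≤ (d:ℝ)^2 := sq_nonneg _
        nlinarith [hLpos, hd0, h3]
      · have h1 : ((n:ℝ) + j + 1/2) * L ≤ ((n:ℝ) + j + 1/2) * ((j:ℝ)/n) :=
          mul_le_mul_of_nonneg_left hL1 (by linarith)
        have h2 : ((n:ℝ) + j + 1/2) * ((j:ℝ)/n) ≤ 2*(j:ℝ) + (j:ℝ)^2 := by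
          rw [mul_div_assoc', div_le_iff₀ hn0]
          nlinarith [mul_nonneg hj0 (show (0:ℝ) ≤ (n:ℝ) - 1 by linarith),
            mul_nonneg (mul_nonneg hj0 hj0) (show (0:ℝ) ≤ (n:ℝ) - 1 by linarith)]
        have hjd2 : (j:ℝ)^2 ≤ (d:ℝ)^2 := by nlinarith [hj0, hjd]
        nlinarith [h1, h2, hjd, hjd2, hj0]
    rw [hidx]
    calc |Real.log (Nat.factorial (n + j) : ℝ)
        - (((n:ℝ) + ((j:ℕ):ℝ) + 1/2) * Real.log n - (n:ℝ))|
        = |(Real.log (Nat.factorial (n + j) : ℝ)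
            - (((n:ℝ) + (j:ℝ) + 1/2) * (Real.log n + L) - ((n:ℝ)+(j:ℝ))))
          + (((n:ℝ) + (j:ℝ) + 1/2) * (Real.log n + L) - ((n:ℝ)+(j:ℝ))
            - (((n:ℝ) + (j:ℝ) + 1/2) * Real.log n - (n:ℝ)))| := by ring_nf
      _ ≤ |Real.log (Nat.factorial (n + j) : ℝ)
            - (((n:ℝ) + (j:ℝ) + 1/2) * (Real.log n + L) - ((n:ℝ)+(j:ℝ)))|
          + |((n:ℝ) + (j:ℝ) + 1/2) * (Real.log n + L) - ((n:ℝ)+(j:ℝ))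
            - (((n:ℝ) + (j:ℝ) + 1/2) * Real.log n - (n:ℝ))| := abs_add_le _ _
      _ ≤ C₀ + (2*(d:ℝ) + (d:ℝ)^2) := by
          exact add_le_add hst key
  -- big factorial estimate
  have hc : ((n*d:ℕ):ℝ) = (n:ℝ)*(d:ℝ) := by push_cast; ring
  have hQ : |Real.log (Nat.factorial (n*d) : ℝ)
      - (((n:ℝ)*(d:ℝ) + 1/2) * (Real.log n + Real.log d) - (n:ℝ)*(d:ℝ))| ≤ C₀ := by
    have hst := hK (n*d) (le_trans hnK (Nat.le_mul_of_pos_right n (by omega)))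
    rw [hc, Real.log_mul hn0.ne' hd0.ne'] at hst
    exact hst
  -- Gauss sum
  have hT : (∑ i ∈ Finset.range d, ((d - 1 - i : ℕ):ℝ)) = (d:ℝ) * ((d:ℝ) - 1) / 2 := by
    rw [Finset.sum_range_reflect (fun i => ((i:ℕ):ℝ)) d]
    have h := Finset.sum_range_id_mul_two d
    have h' : (((∑ i ∈ Finset.range d, i) * 2 : ℕ) : ℝ) = ((d * (d-1) : ℕ):ℝ) := by
      exact_mod_cast congrArg (Nat.cast (R := ℝ)) h
    push_cast [Nat.cast_sub (show 1 ≤ d by omega)] at h'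
    linarith
  -- sum of the P terms
  have hsumP : ∑ i ∈ Finset.range d,
        (((n:ℝ) + ((d-1-i:ℕ):ℝ) + 1/2) * Real.log n - (n:ℝ))
      = ((d:ℝ)*(n:ℝ) + (d:ℝ)*((d:ℝ)-1)/2 + (d:ℝ)/2) * Real.log n - (d:ℝ)*(n:ℝ) := by
    rw [Finset.sum_sub_distrib, ← Finset.sum_mul, Finset.sum_add_distrib,
      Finset.sum_add_distrib, hT, Finset.sum_const, Finset.sum_const, Finset.card_range]
    simp only [nsmul_eq_mul]
    ring
  -- assembly
  have hEeq : Real.log (m n) - (((n*d:ℕ):ℝ) * Real.log d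
        - ((d:ℝ)^2 - 1)/2 * Real.log ((n*d:ℕ):ℝ))
      = (Real.log (Nat.factorial (n*d) : ℝ)
          - (((n:ℝ)*(d:ℝ) + 1/2) * (Real.log n + Real.log d) - (n:ℝ)*(d:ℝ)))
        - ∑ i ∈ Finset.range d, (Real.log (Nat.factorial (n+d-1-i) : ℝ)
            - (((n:ℝ) + ((d-1-i:ℕ):ℝ) + 1/2) * Real.log n - (n:ℝ)))
        + (∑ i ∈ Finset.range d, Real.log (Nat.factorial (d-1-i) : ℝ))
        + (d:ℝ)^2/2 * Real.log d := by
    rw [hlogm, hc, Real.log_mul hn0.ne' hd0.ne', Finset.sum_sub_distrib,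
      Finset.sum_sub_distrib, hsumP]
    ring
  rw [hEeq]
  have hlogd0 : 0 ≤ Real.log d := Real.log_nonneg (by
    have : (2:ℝ) ≤ d := by exact_mod_cast hd
    linarith)
  calc |_ - _ + _ + _|
      ≤ |(Real.log (Nat.factorial (n*d) : ℝ)
          - (((n:ℝ)*(d:ℝ) + 1/2) * (Real.log n + Real.log d) - (n:ℝ)*(d:ℝ)))
        - ∑ i ∈ Finset.range d, (Real.log (Nat.factorial (n+d-1-i) : ℝ)
            - (((n:ℝ) + ((d-1-i:ℕ):ℝ) + 1/2) * Real.log n - (n:ℝ)))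
        + (∑ i ∈ Finset.range d, Real.log (Nat.factorial (d-1-i) : ℝ))|
        + |(d:ℝ)^2/2 * Real.log d| := abs_add_le _ _
    _ ≤ (|(Real.log (Nat.factorial (n*d) : ℝ)
          - (((n:ℝ)*(d:ℝ) + 1/2) * (Real.log n + Real.log d) - (n:ℝ)*(d:ℝ)))
        - ∑ i ∈ Finset.range d, (Real.log (Nat.factorial (n+d-1-i) : ℝ)
            - (((n:ℝ) + ((d-1-i:ℕ):ℝ) + 1/2) * Real.log n - (n:ℝ)))|
        + |∑ i ∈ Finset.range d, Real.log (Nat.factorial (d-1-i) : ℝ)|)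
        + |(d:ℝ)^2/2 * Real.log d| := by gcongr; exact abs_add_le _ _
    _ ≤ ((|Real.log (Nat.factorial (n*d) : ℝ)
          - (((n:ℝ)*(d:ℝ) + 1/2) * (Real.log n + Real.log d) - (n:ℝ)*(d:ℝ))|
        + |∑ i ∈ Finset.range d, (Real.log (Nat.factorial (n+d-1-i) : ℝ)
            - (((n:ℝ) + ((d-1-i:ℕ):ℝ) + 1/2) * Real.log n - (n:ℝ)))|)
        + |∑ i ∈ Finset.range d, Real.log (Nat.factorial (d-1-i) : ℝ)|)
        + |(d:ℝ)^2/2 * Real.log d| := by gcongr ?_ + _ + _; exact abs_sub _ _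
    _ ≤ C₀ + d * (C₀ + (2*(d:ℝ) + (d:ℝ)^2))
        + (∑ i ∈ Finset.range d, |Real.log (Nat.factorial (d-1-i) : ℝ)|)
        + (d:ℝ)^2/2 * Real.log d := by
        have h1 : |∑ i ∈ Finset.range d, (Real.log (Nat.factorial (n+d-1-i) : ℝ)
            - (((n:ℝ) + ((d-1-i:ℕ):ℝ) + 1/2) * Real.log n - (n:ℝ)))|
            ≤ (d:ℝ) * (C₀ + (2*(d:ℝ) + (d:ℝ)^2)) := by
          calc _ ≤ ∑ i ∈ Finset.range d, |Real.log (Nat.factorial (n+d-1-i) : ℝ)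
              - (((n:ℝ) + ((d-1-i:ℕ):ℝ) + 1/2) * Real.log n - (n:ℝ))| :=
                Finset.abs_sum_le_sum_abs _ _
            _ ≤ ∑ _i ∈ Finset.range d, (C₀ + (2*(d:ℝ) + (d:ℝ)^2)) :=
                Finset.sum_le_sum hterm
            _ = (d:ℝ) * (C₀ + (2*(d:ℝ) + (d:ℝ)^2)) := by
                rw [Finset.sum_const, Finset.card_range, nsmul_eq_mul]
        have h2 := Finset.abs_sum_le_sum_abs
          (fun i => Real.log (Nat.factorial (d-1-i) : ℝ)) (Finset.range d)
        have h3 : |(d:ℝ)^2/2 * Real.log d| = (d:ℝ)^2/2 * Real.log d := by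
          rw [abs_of_nonneg]; positivity
        rw [h3]
        gcongr

/-- For `N = n·d` a multiple of `d`, the multiplicity of the trivial `SU(d)` representation,
`m = N! / ∏_{i=1}^d [(N/d + d − i)!/(d−i)!]`, satisfies `m = d^N · Θ(N^{−(d²−1)/2})`;
in particular `log m = N log d + O(log N)` as `N → ∞` with `d` fixed. -/
theorem trivial_rep_multiplicity_asymptotics (d : ℕ) (hd : 2 ≤ d) (m : ℕ → ℝ)
    (hm : ∀ n : ℕ, 0 < n → m n =
      (Nat.factorial (n * d) : ℝ) /
        ∏ i ∈ Finset.range d,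
          ((Nat.factorial (n + d - 1 - i) : ℝ) / (Nat.factorial (d - 1 - i) : ℝ))) :
    (∃ c₁ c₂ : ℝ, 0 < c₁ ∧ 0 < c₂ ∧ ∀ᶠ n in atTop,
        c₁ * (d : ℝ) ^ (n * d) * ((n * d : ℕ) : ℝ) ^ (-(((d : ℝ) ^ 2 - 1) / 2)) ≤ m n ∧
        m n ≤ c₂ * (d : ℝ) ^ (n * d) * ((n * d : ℕ) : ℝ) ^ (-(((d : ℝ) ^ 2 - 1) / 2))) ∧
    (fun n : ℕ => Real.log (m n) - ((n * d : ℕ) : ℝ) * Real.log d)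
      =O[atTop] (fun n : ℕ => Real.log ((n * d : ℕ) : ℝ)) := by
  obtain ⟨C, hC⟩ := main_log_bound d hd m hm
  have hd0 : (0:ℝ) < d := by
    have : (2:ℝ) ≤ d := by exact_mod_cast hd
    linarith
  have hfact : ∀ k : ℕ, (0:ℝ) < (Nat.factorial k : ℝ) := fun k => by
    exact_mod_cast Nat.factorial_pos k
  have hmpos : ∀ n : ℕ, 0 < n → 0 < m n := by
    intro n hn
    rw [hm n hn]
    exact div_pos (hfact _) (Finset.prod_pos fun i _ => div_pos (hfact _) (hfact _))
  constructor
  · refine ⟨Real.exp (-C), Real.exp C, Real.exp_pos _, Real.exp_pos _, ?_⟩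
    filter_upwards [hC, eventually_ge_atTop 1] with n hn hn1
    have hm0 : 0 < m n := hmpos n hn1
    have hndpos : 0 < n * d := by positivity
    have hN0 : (0:ℝ) < ((n*d:ℕ):ℝ) := by exact_mod_cast hndpos
    have hpow : (d:ℝ) ^ (n*d) = Real.exp (((n*d:ℕ):ℝ) * Real.log d) := by
      rw [← Real.rpow_natCast (d:ℝ) (n*d), Real.rpow_def_of_pos hd0]
      ring_nf
    have hrpow : ((n*d:ℕ):ℝ) ^ (-(((d:ℝ)^2 - 1)/2)) =
        Real.exp (-(((d:ℝ)^2 - 1)/2) * Real.log ((n*d:ℕ):ℝ)) := by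
      rw [Real.rpow_def_of_pos hN0]; ring_nf
    have habs := abs_le.mp hn
    constructor
    · have : Real.exp (-C) * (d:ℝ)^(n*d) * ((n*d:ℕ):ℝ) ^ (-(((d:ℝ)^2 - 1)/2))
          = Real.exp (-C + (((n*d:ℕ):ℝ) * Real.log d
              - ((d:ℝ)^2 - 1)/2 * Real.log ((n*d:ℕ):ℝ))) := by
        rw [hpow, hrpow, ← Real.exp_add, ← Real.exp_add]
        ring_nf
      rw [this, ← Real.exp_log hm0]
      exact Real.exp_le_exp.2 (by linarith [habs.1])
    · have : Real.exp C * (d:ℝ)^(n*d) * ((n*d:ℕ):ℝ) ^ (-(((d:ℝ)^2 - 1)/2))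
          = Real.exp (C + (((n*d:ℕ):ℝ) * Real.log d
              - ((d:ℝ)^2 - 1)/2 * Real.log ((n*d:ℕ):ℝ))) := by
        rw [hpow, hrpow, ← Real.exp_add, ← Real.exp_add]
        ring_nf
      rw [this, ← Real.exp_log hm0]
      exact Real.exp_le_exp.2 (by linarith [habs.2])
  · rw [isBigO_iff]
    refine ⟨((d:ℝ)^2 - 1)/2 + |C|, ?_⟩
    filter_upwards [hC, eventually_ge_atTop 2] with n hn hn2
    have hnd : 4 ≤ n * d := by nlinarith [hd, hn2]
    have hN3 : (3:ℝ) ≤ ((n*d:ℕ):ℝ) := by exact_mod_cast (by omega : 3 ≤ n * d)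
    have hN0 : (0:ℝ) < ((n*d:ℕ):ℝ) := by linarith
    have hlogN : 1 ≤ Real.log ((n*d:ℕ):ℝ) := by
      rw [Real.le_log_iff_exp_le hN0]
      calc Real.exp 1 ≤ 2.7182818286 := Real.exp_one_lt_d9.le
        _ ≤ 3 := by norm_num
        _ ≤ _ := hN3
    have hd2 : (2:ℝ) ≤ (d:ℝ) := by exact_mod_cast hd
    have halpha : (0:ℝ) ≤ ((d:ℝ)^2 - 1)/2 := by nlinarith [hd2]
    rw [Real.norm_eq_abs, Real.norm_eq_abs]
    have habs := abs_le.mp hn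
    rw [abs_of_nonneg (by linarith : (0:ℝ) ≤ Real.log ((n*d:ℕ):ℝ))]
    rw [abs_le]
    constructor
    · have hCl : |C| * 1 ≤ |C| * Real.log ((n*d:ℕ):ℝ) :=
        mul_le_mul_of_nonneg_left hlogN (abs_nonneg C)
      linarith [habs.1, le_abs_self C, hCl]
    · have hCl : |C| * 1 ≤ |C| * Real.log ((n*d:ℕ):ℝ) :=
        mul_le_mul_of_nonneg_left hlogN (abs_nonneg C)
      have halphaN : 0 ≤ ((d:ℝ)^2 - 1)/2 * Real.log ((n*d:ℕ):ℝ) :=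
        mul_nonneg halpha (by linarith)
      linarith [habs.2, le_abs_self C, hCl, halphaN]
end

section
/- Let |Ψ⟩ and |n⟩ (n = 1,...,m) be unit vectors in a Hilbert space H, where {|n⟩} are the eigenvectors of the reduced density matrix ρ of Ψ on a factor. Define |Φ_n^±⟩ = (|Ψ⟩⊗|n⟩ ± |n⟩⊗|Ψ⟩)/γ_n^± with γ_n^± = √(2(1 ± ⟨n|ρ|n⟩)). Then the vectors {|Φ_n^k⟩ : k ∈ {+,−}, n ∈ {1,...,m}} are mutually orthonormal. -/
lemma key_sum {m dR : ℕ} (ψ : Fin m → Fin dR → ℂ) (n n' : Fin m) (s s' : ℂ) :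
    ∑ a : Fin m, ∑ b : Fin m, ∑ j : Fin dR,
      (starRingEnd ℂ) (ψ a j * (if b = n then 1 else 0) + s * (if a = n then 1 else 0) * ψ b j)
        * (ψ a j * (if b = n' then 1 else 0) + s' * (if a = n' then 1 else 0) * ψ b j)
    = (if n = n' then 1 else 0) * (∑ a, ∑ j, (starRingEnd ℂ) (ψ a j) * ψ a j)
      + (s' + (starRingEnd ℂ) s) * (∑ j, (starRingEnd ℂ) (ψ n' j) * ψ n j)
      + (starRingEnd ℂ) s * s' * ((if n = n' then 1 else 0) * (∑ b, ∑ j, (starRingEnd ℂ) (ψ b j) * ψ b j)) := by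
  simp only [map_add, map_mul, apply_ite (starRingEnd ℂ), map_one, map_zero, add_mul, mul_add,
    Finset.sum_add_distrib, mul_ite, ite_mul, one_mul, mul_one, zero_mul, mul_zero,
    Finset.sum_ite_eq, Finset.sum_ite_eq', Finset.mem_univ, if_true, Finset.sum_const_zero]
  by_cases h : n = n'
  · subst h
    simp only [if_true, Finset.sum_add_distrib, Finset.sum_ite_irrel, Finset.sum_ite_eq',
      Finset.mem_univ, ite_self, Finset.sum_const_zero, Finset.mul_sum]
    simp only [mul_comm, mul_left_comm, mul_assoc]
    ring
  · simp only [h, if_false, if_neg (fun h' : n' = n => h h'.symm), Finset.sum_const_zero,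
      zero_add, add_zero, Finset.sum_ite_irrel, Finset.sum_ite_eq', Finset.mem_univ, if_true,
      Finset.mul_sum]
    rw [← Finset.sum_add_distrib, ← Finset.sum_add_distrib]
    exact Finset.sum_congr rfl fun j _ => by ring

/-- Let `ψ : Fin m × Fin dR → ℂ` represent a unit vector `|Ψ⟩` in `H_A ⊗ H_B` whose
reduced density matrix `ρ` on `H_A` is diagonal in the standard basis `{|n⟩}`
(the eigenbasis), with `⟨n|ρ|n⟩ < 1`.  Then the vectors
`|Φ_n^±⟩ = (|Ψ⟩⊗|n⟩ ± |n⟩⊗|Ψ⟩)/γ_n^±`, `γ_n^± = √(2(1 ± ⟨n|ρ|n⟩))`, are mutually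
orthonormal. -/
theorem phi_vectors_orthonormal (m dR : ℕ) (ψ : Fin m → Fin dR → ℂ)
    (hnorm : ∑ n, ∑ j, ‖ψ n j‖ ^ 2 = 1)
    (hdiag : ∀ n n' : Fin m, n ≠ n' → ∑ j, ψ n j * star (ψ n' j) = 0)
    (hlt : ∀ n, ∑ j, ‖ψ n j‖ ^ 2 < 1) :
    Orthonormal ℂ (fun kn : Bool × Fin m =>
      (WithLp.equiv 2 (Fin m × Fin m × Fin dR → ℂ)).symm (fun x : Fin m × Fin m × Fin dR =>
          (ψ x.1 x.2.2 * (if x.2.1 = kn.2 then 1 else 0)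
            + (if kn.1 then 1 else -1) * (if x.1 = kn.2 then 1 else 0) * ψ x.2.1 x.2.2)
          / ((Real.sqrt (2 * (1 + (if kn.1 then 1 else -1) * ∑ j, ‖ψ kn.2 j‖ ^ 2)) : ℝ) : ℂ))) := by
  have hp0 : ∀ n, (0:ℝ) ≤ ∑ j, ‖ψ n j‖ ^ 2 := fun n => Finset.sum_nonneg fun j _ => sq_nonneg _
  have hgpos : ∀ (k : Bool) (n : Fin m),
      (0:ℝ) < 2 * (1 + (if k then 1 else -1) * ∑ j, ‖ψ n j‖ ^ 2) := by
    intro k n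
    cases k <;> simp only [if_true, if_false, Bool.false_eq_true] <;> nlinarith [hp0 n, hlt n]
  have hS : (∑ a : Fin m, ∑ j : Fin dR, (starRingEnd ℂ) (ψ a j) * ψ a j) = 1 := by
    simp only [RCLike.conj_mul]
    norm_cast
    rw [hnorm]
    norm_num
  have hDdiag : ∀ n, (∑ j, (starRingEnd ℂ) (ψ n j) * ψ n j) = ((∑ j, ‖ψ n j‖ ^ 2 : ℝ) : ℂ) := by
    intro n; simp only [RCLike.conj_mul]; push_cast; rfl
  have hDoff : ∀ n n' : Fin m, n ≠ n' → (∑ j, (starRingEnd ℂ) (ψ n' j) * ψ n j) = 0 := by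
    intro n n' h
    rw [← hdiag n n' h]
    exact Finset.sum_congr rfl fun j _ => mul_comm _ _
  rw [orthonormal_iff_ite]
  rintro ⟨k, nn⟩ ⟨k', nn'⟩
  simp only [PiLp.inner_apply, WithLp.equiv_symm_apply, PiLp.toLp_apply, RCLike.inner_apply']
  rw [Fintype.sum_prod_type]
  simp only [Fintype.sum_prod_type]
  simp only [map_div₀, div_mul_div_comm, Complex.conj_ofReal, ← Finset.sum_div]
  rw [key_sum, hS]
  rcases eq_or_ne nn nn' with hn | hn
  · subst hn
    rw [hDdiag nn]
    rcases eq_or_ne k k' with hk | hk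
    · subst hk
      have hg := hgpos k nn
      rw [← Complex.ofReal_mul, Real.mul_self_sqrt hg.le, if_pos rfl,
        div_eq_iff (by exact_mod_cast hg.ne'), one_mul]
      cases k <;> simp only [if_true, if_false, Bool.false_eq_true, map_one, map_neg] <;>
        push_cast <;> ring
    · rw [if_neg (show ¬((k, nn) = (k', nn)) by simp [hk])]
      apply div_eq_zero_iff.mpr
      left
      cases k <;> cases k' <;> simp_all
  · rw [hDoff nn nn' hn]
    rw [if_neg (show ¬((k, nn) = (k', nn')) by simp [hn]), if_neg hn]
    simp
end
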